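/- arXiv:1204.0756 — 3 statements merged into one kernel-verified Lean document; each statement's English description precedes it below -/
import Mathlib

section
/- Let n be a positive integer with n ≡ 2 (mod 4), say n = 4p+2, and suppose x_j, y_j, z_j are defined from quasiperiodic sequences (a_j, b_j, c_j) by x_j = b_{j+1}/(a_j a_{j+1}), y_j = a_j/(b_{j+1}c_j), z_j = c_{j+1}/(a_{j+1}b_j), where a_{j+n} = a_j t_j/t_{j+3}, b_{j+n} = b_j t_j/t_{j+2}, c_{j+n} = c_j t_j/t_{j+1} for a 4-periodic sequence t with t₀t₁t₂t₃ = 1. Then ∏_{j=0}^{2p} (x_{2j}² y_{2j} z_{2j+1}) / (x_{2j+1}² y_{2j+1} z_{2j}) = (t₀t₂)/(t₁t₃). -/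
/-
Each factor of the product is the ratio `f (2j+2) / f (2j)` of the quantity `f i = a_i c_i / b_i`,
so the product telescopes to `f n / f 0`, and the quasiperiodicity of `a, b, c` gives
`f n / f 0 = (t₀/t₃)(t₀/t₁)/(t₀/t₂) = t₀t₂/(t₁t₃)`.
-/

theorem Finset.prod_range_div_of_ne_zero {G₀ : Type*} [CommGroupWithZero G₀] (f : ℕ → G₀)
    (hf : ∀ k, f k ≠ 0) (n : ℕ) : ∏ i ∈ range n, f (i + 1) / f i = f n / f 0 := by
  simpa using congrArg Units.val (prod_range_div (fun k => Units.mk0 (f k) (hf k)) n)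

section ACDivB

variable {K : Type*} [Field K] {a b c : ℤ → K}

def acDivB (a b c : ℤ → K) (i : ℤ) : K := a i * c i / b i

theorem acDivB_ne_zero {i : ℤ} (ha : a i ≠ 0) (hb : b i ≠ 0) (hc : c i ≠ 0) :
    acDivB a b c i ≠ 0 :=
  div_ne_zero (mul_ne_zero ha hc) hb

theorem xyz_ratio_eq_acDivB_div {x y z : ℤ → K} (ha : ∀ j, a j ≠ 0) (hb : ∀ j, b j ≠ 0)
    (hc : ∀ j, c j ≠ 0)
    (hx : ∀ j, x j = b (j + 1) / (a j * a (j + 1)))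
    (hy : ∀ j, y j = a j / (b (j + 1) * c j))
    (hz : ∀ j, z j = c (j + 1) / (a (j + 1) * b j)) (i : ℤ) :
    x i ^ 2 * y i * z (i + 1) / (x (i + 1) ^ 2 * y (i + 1) * z i) =
      acDivB a b c (i + 2) / acDivB a b c i := by
  have h : i + 1 + 1 = i + 2 := by ring
  simp only [hx, hy, hz, h, acDivB]
  have := ha i; have := ha (i + 1); have := ha (i + 2)
  have := hb i; have := hb (i + 1); have := hb (i + 2)
  have := hc i; have := hc (i + 1); have := hc (i + 2)
  field_simp

theorem acDivB_add_period_div {t : ℤ → K} {n : ℤ} (j : ℤ) (ha : a j ≠ 0) (hb : b j ≠ 0)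
    (hc : c j ≠ 0)
    (haq : ∀ j, a (j + n) = a j * (t j / t (j + 3)))
    (hbq : ∀ j, b (j + n) = b j * (t j / t (j + 2)))
    (hcq : ∀ j, c (j + n) = c j * (t j / t (j + 1))) :
    acDivB a b c (j + n) / acDivB a b c j = t j * t (j + 2) / (t (j + 1) * t (j + 3)) := by
  rw [acDivB, acDivB, haq, hbq, hcq]
  field_simp

end ACDivB

theorem xyz_invariant_formula_n_mod4_eq_two_general (p : ℕ) (a b c t x y z : ℤ → ℝ)
    (ha0 : ∀ j, a j ≠ 0) (hb0 : ∀ j, b j ≠ 0) (hc0 : ∀ j, c j ≠ 0)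
    (haq : ∀ j, a (j + (4 * (p : ℤ) + 2)) = a j * (t j / t (j + 3)))
    (hbq : ∀ j, b (j + (4 * (p : ℤ) + 2)) = b j * (t j / t (j + 2)))
    (hcq : ∀ j, c (j + (4 * (p : ℤ) + 2)) = c j * (t j / t (j + 1)))
    (hx : ∀ j, x j = b (j + 1) / (a j * a (j + 1)))
    (hy : ∀ j, y j = a j / (b (j + 1) * c j))
    (hz : ∀ j, z j = c (j + 1) / (a (j + 1) * b j)) :
    ∏ j ∈ Finset.range (2 * p + 1),
        (x (2 * (j : ℤ)) ^ 2 * y (2 * (j : ℤ)) * z (2 * (j : ℤ) + 1)) /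
          (x (2 * (j : ℤ) + 1) ^ 2 * y (2 * (j : ℤ) + 1) * z (2 * (j : ℤ))) =
      (t 0 * t 2) / (t 1 * t 3) := by
  set f : ℕ → ℝ := fun k => acDivB a b c (2 * k)
  have hn : 2 * (2 * (p : ℤ) + 1) = 4 * p + 2 := by ring
  calc _ = ∏ j ∈ Finset.range (2 * p + 1), f (j + 1) / f j := by
        refine Finset.prod_congr rfl fun j _ => ?_
        rw [xyz_ratio_eq_acDivB_div ha0 hb0 hc0 hx hy hz]
        push_cast [f]
        ring_nf
    _ = f (2 * p + 1) / f 0 :=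
        Finset.prod_range_div_of_ne_zero f (fun _ => acDivB_ne_zero (ha0 _) (hb0 _) (hc0 _)) _
    _ = t 0 * t 2 / (t 1 * t 3) := by
        simpa [f, hn] using acDivB_add_period_div 0 (ha0 0) (hb0 0) (hc0 0) haq hbq hcq

/-- **The projective invariant `αγ/β` in `(x,y,z)`-coordinates for `n ≡ 2 (mod 4)`.**
Let `n = 4p+2` and suppose `x_j, y_j, z_j` are defined from quasiperiodic sequences
`(a_j, b_j, c_j)` of nonzero scalars by `x_j = b_{j+1}/(a_j a_{j+1})`,
`y_j = a_j/(b_{j+1}c_j)`, `z_j = c_{j+1}/(a_{j+1}b_j)`, where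
`a_{j+n} = a_j t_j/t_{j+3}`, `b_{j+n} = b_j t_j/t_{j+2}`, `c_{j+n} = c_j t_j/t_{j+1}` for a
4-periodic sequence `t` with `t₀t₁t₂t₃ = 1`. Then
`∏_{j=0}^{2p} (x_{2j}² y_{2j} z_{2j+1}) / (x_{2j+1}² y_{2j+1} z_{2j}) = (t₀t₂)/(t₁t₃)`. -/
theorem xyz_invariant_formula_n_mod4_eq_two (p : ℕ) (a b c t x y z : ℤ → ℝ)
    (ha0 : ∀ j, a j ≠ 0) (hb0 : ∀ j, b j ≠ 0) (hc0 : ∀ j, c j ≠ 0)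
    (ht0 : ∀ j, t j ≠ 0) (htper : ∀ j, t (j + 4) = t j)
    (htprod : t 0 * t 1 * t 2 * t 3 = 1)
    (haq : ∀ j, a (j + (4 * (p : ℤ) + 2)) = a j * (t j / t (j + 3)))
    (hbq : ∀ j, b (j + (4 * (p : ℤ) + 2)) = b j * (t j / t (j + 2)))
    (hcq : ∀ j, c (j + (4 * (p : ℤ) + 2)) = c j * (t j / t (j + 1)))
    (hx : ∀ j, x j = b (j + 1) / (a j * a (j + 1)))
    (hy : ∀ j, y j = a j / (b (j + 1) * c j))
    (hz : ∀ j, z j = c (j + 1) / (a (j + 1) * b j)) :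
    ∏ j ∈ Finset.range (2 * p + 1),
        (x (2 * (j : ℤ)) ^ 2 * y (2 * (j : ℤ)) * z (2 * (j : ℤ) + 1)) /
          (x (2 * (j : ℤ) + 1) ^ 2 * y (2 * (j : ℤ) + 1) * z (2 * (j : ℤ))) =
      (t 0 * t 2) / (t 1 * t 3) :=
  xyz_invariant_formula_n_mod4_eq_two_general p a b c t x y z ha0 hb0 hc0 haq hbq hcq hx hy hz
end

section
/- Consider the map on triples of bi-infinite sequences defined (in the coordinates x_i, y_i, z_i) by T*(x_i) = x_{i+1}(1 + y_{i−1} + z_{i+2} + y_{i−1}z_{i+2} − y_{i+1}z_i)/(1 + y_{i−1} + z_i), T*(y_i) = (x_{i−1}y_{i−1}z_i)/(x_i z_{i−1}) · (1+y_{i+1}+z_{i+2})(1+y_{i−2}+z_{i−1}) / ((1+y_i+z_{i+1})(1+y_{i−1}+z_{i+2}+y_{i−1}z_{i+2}−y_{i+1}z_i)), T*(z_i) = (x_{i+1}z_i)/x_i · (1+y_{i+1}+z_{i+2})(1+y_{i−2}+z_{i−1}) / ((1+y_{i−1}+z_i)(1+y_{i−2}+z_{i+1}−y_iz_{i−1}+y_{i−2}z_{i+1})).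 Then the product I₀⁻⁴ := ∏_{i=0}^{n−1} x_i² y_i z_i over one period of n-periodic sequences is invariant under this map: ∏ T*(x_i)² T*(y_i) T*(z_i) = ∏ x_i² y_i z_i. -/
/-!
Put `A_i = 1 + y_{i-1} + z_i` (`denX`) and let `C_i` (`numX`) be the numerator of
`T*(x_i) / x_{i+1}`, so that `T*(x_i) = x_{i+1} C_i / A_i`. Every other factor in the formulas
for `T*(y_i)` and `T*(z_i)` is a shift of `x`, `y`, `z`, `A` or `C`, and shifts do not change a
product over a full period. Hence `∏ T*(x_i) = ∏ x_i · ∏ C_i / ∏ A_i`,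
`∏ T*(y_i) = ∏ y_i · ∏ A_i / ∏ C_i` and `∏ T*(z_i) = ∏ z_i · ∏ A_i / ∏ C_i`, so the `A`'s and
`C`'s cancel in `∏ T*(x_i)² T*(y_i) T*(z_i)`.
-/

open Finset Function

namespace Function.Periodic

variable {M : Type*} [CommMonoid M] {f : ℤ → M} {n : ℕ}

theorem prod_range_comp_add_one (hf : Periodic f n) :
    ∏ i ∈ range n, f (i + 1) = ∏ i ∈ range n, f i := by
  cases n with
  | zero => rfl
  | succ m =>
    rw [prod_range_succ, prod_range_succ']
    congr 1
    simpa using hf 0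

theorem prod_range_comp_add (hf : Periodic f n) (k : ℤ) :
    ∏ i ∈ range n, f (i + k) = ∏ i ∈ range n, f i := by
  induction k using Int.induction_on with
  | zero => simp
  | succ k ih =>
    rw [← ih, ← (hf.add_const k).prod_range_comp_add_one]
    simp only [add_right_comm _ (1 : ℤ), add_assoc]
  | pred k ih =>
    rw [← ih, ← (hf.add_const (-k - 1)).prod_range_comp_add_one]
    congr! 2
    ring

theorem prod_range_comp_sub (hf : Periodic f n) (k : ℤ) :
    ∏ i ∈ range n, f (i - k) = ∏ i ∈ range n, f i := by
  simpa only [sub_eq_add_neg] using hf.prod_range_comp_add (-k)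

end Function.Periodic

namespace Pentagram3D

variable {K : Type*} [Field K] {n : ℕ} {x y z : ℤ → K}

def denX (y z : ℤ → K) (i : ℤ) : K := 1 + y (i - 1) + z i

def numX (y z : ℤ → K) (i : ℤ) : K :=
  1 + y (i - 1) + z (i + 2) + y (i - 1) * z (i + 2) - y (i + 1) * z i

def mapX (x y z : ℤ → K) (i : ℤ) : K := x (i + 1) * numX y z i / denX y z i

def mapY (x y z : ℤ → K) (i : ℤ) : K :=
  x (i - 1) * y (i - 1) * z i / (x i * z (i - 1)) *
    (denX y z (i + 2) * denX y z (i - 1)) / (denX y z (i + 1) * numX y z i)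

def mapZ (x y z : ℤ → K) (i : ℤ) : K :=
  x (i + 1) * z i / x i * (denX y z (i + 2) * denX y z (i - 1)) /
    (denX y z i * numX y z (i - 1))

theorem denX_add_one (i : ℤ) : denX y z (i + 1) = 1 + y i + z (i + 1) := by
  simp only [denX, add_sub_cancel_right]

theorem denX_add_two (i : ℤ) : denX y z (i + 2) = 1 + y (i + 1) + z (i + 2) := by
  simp only [denX]; ring_nf

theorem denX_sub_one (i : ℤ) : denX y z (i - 1) = 1 + y (i - 2) + z (i - 1) := by
  simp only [denX]; ring_nf

theorem numX_sub_one (i : ℤ) : numX y z (i - 1) =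
    1 + y (i - 2) + z (i + 1) - y i * z (i - 1) + y (i - 2) * z (i + 1) := by
  simp only [numX]; ring_nf

theorem denX_periodic (hy : Periodic y n) (hz : Periodic z n) : Periodic (denX y z) n :=
  fun i => by simp only [denX, add_sub_right_comm, hy (i - 1), hz i]

theorem numX_periodic (hy : Periodic y n) (hz : Periodic z n) : Periodic (numX y z) n :=
  fun i => by
    simp only [numX, add_sub_right_comm, add_right_comm i (n : ℤ), hy (i - 1), hy (i + 1),
      hz (i + 2), hz i]

theorem prod_mapX (hx : Periodic x n) :
    ∏ i ∈ range n, mapX x y z i =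
      (∏ i ∈ range n, x i) * (∏ i ∈ range n, numX y z i) / ∏ i ∈ range n, denX y z i := by
  simp only [mapX, prod_div_distrib, prod_mul_distrib, hx.prod_range_comp_add 1]

theorem prod_mapY (hx : Periodic x n) (hy : Periodic y n) (hz : Periodic z n)
    (hx0 : ∀ i, x i ≠ 0) (hz0 : ∀ i, z i ≠ 0) (hA : ∀ i, denX y z i ≠ 0) :
    ∏ i ∈ range n, mapY x y z i =
      (∏ i ∈ range n, y i) * (∏ i ∈ range n, denX y z i) / ∏ i ∈ range n, numX y z i := by
  have hA' := denX_periodic hy hz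
  simp only [mapY, prod_div_distrib, prod_mul_distrib, hx.prod_range_comp_sub 1,
    hy.prod_range_comp_sub 1, hz.prod_range_comp_sub 1, hA'.prod_range_comp_add 2,
    hA'.prod_range_comp_add 1, hA'.prod_range_comp_sub 1]
  have := prod_ne_zero_iff.mpr fun i (_ : i ∈ range n) => hx0 i
  have := prod_ne_zero_iff.mpr fun i (_ : i ∈ range n) => hz0 i
  have := prod_ne_zero_iff.mpr fun i (_ : i ∈ range n) => hA i
  field_simp

theorem prod_mapZ (hx : Periodic x n) (hy : Periodic y n) (hz : Periodic z n)
    (hx0 : ∀ i, x i ≠ 0) (hA : ∀ i, denX y z i ≠ 0) :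
    ∏ i ∈ range n, mapZ x y z i =
      (∏ i ∈ range n, z i) * (∏ i ∈ range n, denX y z i) / ∏ i ∈ range n, numX y z i := by
  have hA' := denX_periodic hy hz
  simp only [mapZ, prod_div_distrib, prod_mul_distrib, hx.prod_range_comp_add 1,
    hA'.prod_range_comp_add 2, hA'.prod_range_comp_sub 1,
    (numX_periodic hy hz).prod_range_comp_sub 1]
  have := prod_ne_zero_iff.mpr fun i (_ : i ∈ range n) => hx0 i
  have := prod_ne_zero_iff.mpr fun i (_ : i ∈ range n) => hA i
  field_simp

theorem prod_mapX_sq_mul_mapY_mul_mapZ (hx : Periodic x n) (hy : Periodic y n)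
    (hz : Periodic z n) (hx0 : ∀ i, x i ≠ 0) (hz0 : ∀ i, z i ≠ 0) (hA : ∀ i, denX y z i ≠ 0)
    (hC : ∀ i, numX y z i ≠ 0) :
    ∏ i ∈ range n, mapX x y z i ^ 2 * mapY x y z i * mapZ x y z i =
      ∏ i ∈ range n, x i ^ 2 * y i * z i := by
  simp only [prod_mul_distrib, prod_pow, prod_mapX hx, prod_mapY hx hy hz hx0 hz0 hA,
    prod_mapZ hx hy hz hx0 hA]
  have := prod_ne_zero_iff.mpr fun i (_ : i ∈ range n) => hA i
  have := prod_ne_zero_iff.mpr fun i (_ : i ∈ range n) => hC i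
  field_simp

end Pentagram3D

open Pentagram3D in
theorem pentagram3D_product_invariant_general (n : ℕ) (x y z x' y' z' : ℤ → ℝ)
    (hxper : ∀ i, x (i + n) = x i) (hyper : ∀ i, y (i + n) = y i)
    (hzper : ∀ i, z (i + n) = z i)
    (hx0 : ∀ i, x i ≠ 0) (hz0 : ∀ i, z i ≠ 0)
    (hA : ∀ i, 1 + y (i - 1) + z i ≠ 0)
    (hC : ∀ i, 1 + y (i - 1) + z (i + 2) + y (i - 1) * z (i + 2) - y (i + 1) * z i ≠ 0)
    (hx' : ∀ i, x' i = x (i + 1) *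
      (1 + y (i - 1) + z (i + 2) + y (i - 1) * z (i + 2) - y (i + 1) * z i) /
        (1 + y (i - 1) + z i))
    (hy' : ∀ i, y' i = (x (i - 1) * y (i - 1) * z i) / (x i * z (i - 1)) *
      ((1 + y (i + 1) + z (i + 2)) * (1 + y (i - 2) + z (i - 1))) /
        ((1 + y i + z (i + 1)) *
          (1 + y (i - 1) + z (i + 2) + y (i - 1) * z (i + 2) - y (i + 1) * z i)))
    (hz' : ∀ i, z' i = (x (i + 1) * z i) / x i *
      ((1 + y (i + 1) + z (i + 2)) * (1 + y (i - 2) + z (i - 1))) /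
        ((1 + y (i - 1) + z i) *
          (1 + y (i - 2) + z (i + 1) - y i * z (i - 1) + y (i - 2) * z (i + 1)))) :
    ∏ i ∈ Finset.range n, x' (i : ℤ) ^ 2 * y' (i : ℤ) * z' (i : ℤ) =
      ∏ i ∈ Finset.range n, x (i : ℤ) ^ 2 * y (i : ℤ) * z (i : ℤ) := by
  have hx'_eq : x' = mapX x y z := funext hx'
  have hy'_eq : y' = mapY x y z := funext fun i => by
    rw [hy', mapY, denX_add_two, denX_sub_one, denX_add_one]; rfl
  have hz'_eq : z' = mapZ x y z := funext fun i => by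
    rw [hz', mapZ, denX_add_two, denX_sub_one, numX_sub_one]; rfl
  rw [hx'_eq, hy'_eq, hz'_eq]
  exact prod_mapX_sq_mul_mapY_mul_mapZ hxper hyper hzper hx0 hz0 hA hC

/-- **Invariance of `I₀⁻⁴ = ∏ x_i² y_i z_i` under the 3D pentagram map.**
Consider the 3D pentagram map written in the coordinates `(x_i, y_i, z_i)` of `n`-periodic
sequences of scalars (with all appearing denominators nonzero):
`T*(x_i) = x_{i+1}(1 + y_{i−1} + z_{i+2} + y_{i−1}z_{i+2} − y_{i+1}z_i)/(1 + y_{i−1} + z_i)`,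
`T*(y_i), T*(z_i)` as in the theorem of explicit formulas. Then the product
`∏_{i=0}^{n−1} x_i² y_i z_i` over one period is invariant:
`∏ T*(x_i)² T*(y_i) T*(z_i) = ∏ x_i² y_i z_i`. -/
theorem pentagram3D_product_invariant (n : ℕ) (hn : 0 < n) (x y z x' y' z' : ℤ → ℝ)
    (hxper : ∀ i, x (i + n) = x i) (hyper : ∀ i, y (i + n) = y i)
    (hzper : ∀ i, z (i + n) = z i)
    (hx'per : ∀ i, x' (i + n) = x' i) (hy'per : ∀ i, y' (i + n) = y' i)
    (hz'per : ∀ i, z' (i + n) = z' i)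
    (hx0 : ∀ i, x i ≠ 0) (hz0 : ∀ i, z i ≠ 0)
    (hA : ∀ i, 1 + y (i - 1) + z i ≠ 0)
    (hB : ∀ i, 1 + y i + z (i + 1) ≠ 0)
    (hC : ∀ i, 1 + y (i - 1) + z (i + 2) + y (i - 1) * z (i + 2) - y (i + 1) * z i ≠ 0)
    (hD : ∀ i, 1 + y (i - 2) + z (i + 1) - y i * z (i - 1) + y (i - 2) * z (i + 1) ≠ 0)
    (hx' : ∀ i, x' i = x (i + 1) *
      (1 + y (i - 1) + z (i + 2) + y (i - 1) * z (i + 2) - y (i + 1) * z i) /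
        (1 + y (i - 1) + z i))
    (hy' : ∀ i, y' i = (x (i - 1) * y (i - 1) * z i) / (x i * z (i - 1)) *
      ((1 + y (i + 1) + z (i + 2)) * (1 + y (i - 2) + z (i - 1))) /
        ((1 + y i + z (i + 1)) *
          (1 + y (i - 1) + z (i + 2) + y (i - 1) * z (i + 2) - y (i + 1) * z i)))
    (hz' : ∀ i, z' i = (x (i + 1) * z i) / x i *
      ((1 + y (i + 1) + z (i + 2)) * (1 + y (i - 2) + z (i - 1))) /
        ((1 + y (i - 1) + z i) *
          (1 + y (i - 2) + z (i + 1) - y i * z (i - 1) + y (i - 2) * z (i + 1)))) :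
    ∏ i ∈ Finset.range n, x' (i : ℤ) ^ 2 * y' (i : ℤ) * z' (i : ℤ) =
      ∏ i ∈ Finset.range n, x (i : ℤ) ^ 2 * y (i : ℤ) * z (i : ℤ) :=
  pentagram3D_product_invariant_general n x y z x' y' z' hxper hyper hzper hx0 hz0 hA hC hx' hy' hz'
end

section
/- The involution α defined on sequences of vectors V_i in ℝ⁴ by W_i = *(V_i ∧ V_{i−1} ∧ V_{i+1}), applied to a sequence satisfying V_{j+4} = a_jV_{j+3} + b_jV_{j+2} + c_jV_{j+1} − V_j with det|V_j, V_{j+1}, V_{j+2}, V_{j+3}| = 1 for all j, produces a sequence satisfying W_{i+4} = c_{i+1}W_{i+3} + b_iW_{i+2} + a_{i−1}W_{i+1} − W_i. -/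
open Matrix

private lemma my_det_fin_four (M : Matrix (Fin 4) (Fin 4) ℝ) :
    M.det =
      M 0 0 * (M 1 1 * (M 2 2 * M 3 3 - M 2 3 * M 3 2) - M 1 2 * (M 2 1 * M 3 3 - M 2 3 * M 3 1)
        + M 1 3 * (M 2 1 * M 3 2 - M 2 2 * M 3 1))
      - M 0 1 * (M 1 0 * (M 2 2 * M 3 3 - M 2 3 * M 3 2) - M 1 2 * (M 2 0 * M 3 3 - M 2 3 * M 3 0)
        + M 1 3 * (M 2 0 * M 3 2 - M 2 2 * M 3 0))
      + M 0 2 * (M 1 0 * (M 2 1 * M 3 3 - M 2 3 * M 3 1) - M 1 1 * (M 2 0 * M 3 3 - M 2 3 * M 3 0)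
        + M 1 3 * (M 2 0 * M 3 1 - M 2 1 * M 3 0))
      - M 0 3 * (M 1 0 * (M 2 1 * M 3 2 - M 2 2 * M 3 1) - M 1 1 * (M 2 0 * M 3 2 - M 2 2 * M 3 0)
        + M 1 2 * (M 2 0 * M 3 1 - M 2 1 * M 3 0)) := by
  rw [Matrix.det_succ_row_zero]
  simp [Fin.sum_univ_succ, Matrix.det_fin_three, Matrix.submatrix,
    show (Fin.succ 2 : Fin 4) = 3 from rfl,
    show ((2 : Fin 4).succAbove 2 : Fin 4) = 3 from rfl,
    show ((1 : Fin 4).succAbove 2 : Fin 4) = 3 from rfl,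
    show ((3 : Fin 4).succAbove 2 : Fin 4) = 2 from rfl,
    show (Fin.castSucc 2 : Fin 4) = 2 from rfl]
  ring

private lemma det4_rows (r0 r1 r2 r3 : Fin 4 → ℝ) :
    (Matrix.of ![r0, r1, r2, r3]).det =
      r0 0 * (r1 1 * (r2 2 * r3 3 - r2 3 * r3 2) - r1 2 * (r2 1 * r3 3 - r2 3 * r3 1)
        + r1 3 * (r2 1 * r3 2 - r2 2 * r3 1))
      - r0 1 * (r1 0 * (r2 2 * r3 3 - r2 3 * r3 2) - r1 2 * (r2 0 * r3 3 - r2 3 * r3 0)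
        + r1 3 * (r2 0 * r3 2 - r2 2 * r3 0))
      + r0 2 * (r1 0 * (r2 1 * r3 3 - r2 3 * r3 1) - r1 1 * (r2 0 * r3 3 - r2 3 * r3 0)
        + r1 3 * (r2 0 * r3 1 - r2 1 * r3 0))
      - r0 3 * (r1 0 * (r2 1 * r3 2 - r2 2 * r3 1) - r1 1 * (r2 0 * r3 2 - r2 2 * r3 0)
        + r1 2 * (r2 0 * r3 1 - r2 1 * r3 0)) := by
  rw [my_det_fin_four]
  rfl

set_option maxHeartbeats 2000000 in
/-- Determinant identity used in the proof: purely multilinear algebra. -/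
private lemma det_identity (u v w x X : Fin 4 → ℝ) (a0 b0 c0 a1 b1 c1 a2 b2 c2 : ℝ)
    (p q r : Fin 4 → ℝ)
    (hp : p = a0 • x + b0 • w + c0 • v - u)
    (hq : q = a1 • p + b1 • x + c1 • w - v)
    (hr : r = a2 • q + b2 • p + c2 • x - w) :
    (Matrix.of ![q, p, r, X]).det =
      c2 * (Matrix.of ![p, x, q, X]).det + b1 * (Matrix.of ![x, w, p, X]).det +
      a0 * (Matrix.of ![w, v, x, X]).det - (Matrix.of ![v, u, w, X]).det := by
  have hp' : ∀ k, p k = a0 * x k + b0 * w k + c0 * v k - u k := by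
    intro k; rw [hp]; simp
  have hq' : ∀ k, q k = a1 * p k + b1 * x k + c1 * w k - v k := by
    intro k; rw [hq]; simp
  have hr' : ∀ k, r k = a2 * q k + b2 * p k + c2 * x k - w k := by
    intro k; rw [hr]; simp
  rw [det4_rows, det4_rows, det4_rows, det4_rows, det4_rows]
  simp only [hr', hq', hp']
  ring

/-- **The involution `α` transforms the difference equation.**
The involution `α` defined on sequences of vectors `V_i` in `ℝ⁴` by
`W_i = *(V_i ∧ V_{i−1} ∧ V_{i+1})` (i.e. `⟨W_i, X⟩ = det|V_i, V_{i−1}, V_{i+1}, X|` for all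
`X`, via the Hodge star), applied to a sequence satisfying
`V_{j+4} = a_jV_{j+3} + b_jV_{j+2} + c_jV_{j+1} − V_j` with
`det|V_j, V_{j+1}, V_{j+2}, V_{j+3}| = 1` for all `j`, produces a sequence satisfying
`W_{i+4} = c_{i+1}W_{i+3} + b_iW_{i+2} + a_{i−1}W_{i+1} − W_i`. -/
theorem involution_alpha_difference_equation (V W : ℤ → Fin 4 → ℝ) (a b c : ℤ → ℝ)
    (hrec : ∀ j, V (j + 4) = a j • V (j + 3) + b j • V (j + 2) + c j • V (j + 1) - V j)
    (hdet : ∀ j, (Matrix.of ![V j, V (j + 1), V (j + 2), V (j + 3)]).det = 1)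
    (hW : ∀ i, ∀ X : Fin 4 → ℝ,
      W i ⬝ᵥ X = (Matrix.of ![V i, V (i - 1), V (i + 1), X]).det) :
    ∀ i, W (i + 4) = c (i + 1) • W (i + 3) + b i • W (i + 2) + a (i - 1) • W (i + 1) - W i := by
  intro i
  have key : ∀ X : Fin 4 → ℝ, W (i + 4) ⬝ᵥ X =
      (c (i + 1) • W (i + 3) + b i • W (i + 2) + a (i - 1) • W (i + 1) - W i) ⬝ᵥ X := by
    intro X
    have e3 : V (i + 3) =
        a (i - 1) • V (i + 2) + b (i - 1) • V (i + 1) + c (i - 1) • V i - V (i - 1) := by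
      have h := hrec (i - 1)
      rw [show i - 1 + 4 = i + 3 by ring, show i - 1 + 3 = i + 2 by ring,
        show i - 1 + 2 = i + 1 by ring, show i - 1 + 1 = i by ring] at h
      exact h
    have e4 := hrec i
    have e5 : V (i + 5) =
        a (i + 1) • V (i + 4) + b (i + 1) • V (i + 3) + c (i + 1) • V (i + 2) - V (i + 1) := by
      have h := hrec (i + 1)
      rw [show i + 1 + 4 = i + 5 by ring, show i + 1 + 3 = i + 4 by ring,
        show i + 1 + 2 = i + 3 by ring, show i + 1 + 1 = i + 2 by ring] at h
      exact h
    have h4 := hW (i + 4) X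
    rw [show i + 4 - 1 = i + 3 by ring, show i + 4 + 1 = i + 5 by ring] at h4
    have h3 := hW (i + 3) X
    rw [show i + 3 - 1 = i + 2 by ring, show i + 3 + 1 = i + 4 by ring] at h3
    have h2 := hW (i + 2) X
    rw [show i + 2 - 1 = i + 1 by ring, show i + 2 + 1 = i + 3 by ring] at h2
    have h1 := hW (i + 1) X
    rw [show i + 1 - 1 = i by ring, show i + 1 + 1 = i + 2 by ring] at h1
    have h0 := hW i X
    rw [sub_dotProduct, add_dotProduct, add_dotProduct, smul_dotProduct, smul_dotProduct,
      smul_dotProduct, h4, h3, h2, h1, h0]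
    exact det_identity (V (i - 1)) (V i) (V (i + 1)) (V (i + 2)) X
      (a (i - 1)) (b (i - 1)) (c (i - 1)) (a i) (b i) (c i) (a (i + 1)) (b (i + 1)) (c (i + 1))
      (V (i + 3)) (V (i + 4)) (V (i + 5)) e3 e4 e5
  funext k
  have h := key (Pi.single k 1)
  simpa [dotProduct_single] using h
end
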